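/- arXiv:2110.04247 — 9 statements merged into one kernel-verified Lean document; each statement's English description precedes it below -/
import Mathlib

section
/- For all natural numbers m, n ≥ 1, gcd(u_m, u_n) = u_{gcd(m,n)}. -/
private def lucasU (P : ℕ) : ℕ → ℕ
  | 0 => 0
  | 1 => 1
  | n + 2 => P * lucasU P (n + 1) + lucasU P n

private lemma lucasU_two (P k : ℕ) :
    lucasU P (k + 2) = P * lucasU P (k + 1) + lucasU P k := rfl

private lemma lucasU_add (P m n : ℕ) :
    lucasU P (m + n + 1) = lucasU P m * lucasU P n + lucasU P (m + 1) * lucasU P (n + 1) := by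
  induction n generalizing m with
  | zero => simp [lucasU]
  | succ n ih =>
    rw [show m + (n + 1) + 1 = m + 1 + n + 1 by omega, ih (m + 1), lucasU_two, lucasU_two]
    ring

private lemma lucasU_coprime_succ (P n : ℕ) :
    Nat.Coprime (lucasU P n) (lucasU P (n + 1)) := by
  induction n with
  | zero => simp [lucasU, Nat.Coprime]
  | succ n ih =>
    show Nat.Coprime (lucasU P (n + 1)) (P * lucasU P (n + 1) + lucasU P n)
    unfold Nat.Coprime
    rw [Nat.add_comm (P * lucasU P (n + 1)) (lucasU P n), Nat.gcd_add_mul_right_right, Nat.gcd_comm]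
    exact ih

private lemma gcd_lucasU_add_self (P m n : ℕ) :
    Nat.gcd (lucasU P m) (lucasU P (n + m)) = Nat.gcd (lucasU P m) (lucasU P n) := by
  rcases Nat.eq_zero_or_pos n with rfl | h
  · simp [lucasU]
  obtain ⟨k, rfl⟩ : ∃ k, n = k + 1 := ⟨n - 1, by omega⟩
  calc
    Nat.gcd (lucasU P m) (lucasU P (k + 1 + m)) =
        Nat.gcd (lucasU P m) (lucasU P k * lucasU P m + lucasU P (k + 1) * lucasU P (m + 1)) := by
        rw [show k + 1 + m = k + m + 1 by omega, lucasU_add]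
    _ = Nat.gcd (lucasU P m) (lucasU P (k + 1) * lucasU P (m + 1)) := by
        rw [add_comm, Nat.gcd_add_mul_right_right]
    _ = Nat.gcd (lucasU P m) (lucasU P (k + 1)) :=
      Nat.Coprime.gcd_mul_right_cancel_right _ (Nat.Coprime.symm (lucasU_coprime_succ P m))

private lemma gcd_lucasU_add_mul_self (P m n : ℕ) :
    ∀ k, Nat.gcd (lucasU P m) (lucasU P (n + k * m)) = Nat.gcd (lucasU P m) (lucasU P n)
  | 0 => by simp
  | k + 1 => by
    rw [← gcd_lucasU_add_mul_self P m n k, add_mul, ← add_assoc, one_mul, gcd_lucasU_add_self]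

private lemma lucasU_gcd (P m n : ℕ) :
    lucasU P (Nat.gcd m n) = Nat.gcd (lucasU P m) (lucasU P n) := by
  induction m, n using Nat.gcd.induction with
  | H0 => simp [lucasU]
  | H1 m n _ h' =>
    rw [← Nat.gcd_rec m n] at h'
    conv_rhs => rw [← Nat.mod_add_div' n m]
    rwa [gcd_lucasU_add_mul_self P m (n % m) (n / m), Nat.gcd_comm (lucasU P m)]

theorem stmt_5 (P : ℕ) (hP : 3 ≤ P) (u : ℕ → ℕ)
    (hu0 : u 0 = 0) (hu1 : u 1 = 1)
    (hrec : ∀ n, 2 ≤ n → u n = P * u (n - 1) + u (n - 2)) :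
    ∀ m n : ℕ, 1 ≤ m → 1 ≤ n → Nat.gcd (u m) (u n) = u (Nat.gcd m n) := by
  have key : ∀ n, u n = lucasU P n := by
    intro n
    induction n using Nat.strong_induction_on with
    | _ n ih =>
      match n with
      | 0 => simpa [lucasU]
      | 1 => simpa [lucasU]
      | n + 2 =>
        rw [hrec (n + 2) (by omega)]
        simp only [Nat.add_sub_cancel, show n + 2 - 1 = n + 1 from rfl]
        rw [ih (n + 1) (by omega), ih n (by omega)]
        rfl
  intro m n _ _
  rw [key m, key n, key, lucasU_gcd]
end

section
/- Suppose P is even and let t₁ = ν₂(P) be the 2-adic valuation of P. Then for natural numbers m ≥ 1 and j ≥ 1, 2^j divides m if and only if 2^{j+t₁−1} divides u_m. -/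
section Aux
variable (P : ℕ) (u : ℕ → ℕ)
variable (hu0 : u 0 = 0) (hu1 : u 1 = 1) (hrec : ∀ n, u (n + 2) = P * u (n + 1) + u n)

include hu0 hu1 hrec in
theorem aux_add : ∀ m n, u (m + n + 1) = u (m + 1) * u (n + 1) + u m * u n := by
  intro m
  induction m using Nat.twoStepInduction with
  | zero => intro n; simp [hu0, hu1]
  | one =>
      intro n
      have h2 : u 2 = P := by have := hrec 0; simp [hu0, hu1] at this; omega
      have := hrec n
      simp only [hu1, h2]
      rw [show 1 + n + 1 = n + 2 by ring, this]; ring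
  | more m ih1 ih2 =>
      intro n
      have A := ih2 n
      have B := ih1 n
      have C := hrec (m + 1)
      have D := hrec m
      have E := hrec (m + n + 1)
      rw [show m + 1 + n + 1 = m + n + 2 by ring, show m + 1 + 1 = m + 2 by ring] at A
      rw [show m + 1 + 2 = m + 3 by ring, show m + 1 + 1 = m + 2 by ring] at C
      rw [show m + n + 1 + 2 = m + n + 3 by ring, show m + n + 1 + 1 = m + n + 2 by ring] at E
      rw [show m + 2 + n + 1 = m + n + 3 by ring, show m + 2 + 1 = m + 3 by ring, E, A, B, C, D]
      ring

include hu0 hu1 hrec in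
theorem aux_double : ∀ k, 1 ≤ k → u (2 * k) = u k * (u (k + 1) + u (k - 1)) := by
  intro k hk
  obtain ⟨k, rfl⟩ := Nat.exists_eq_add_of_le hk
  have := aux_add P u hu0 hu1 hrec (k + 1) k
  rw [show k + 1 + k + 1 = 2 * (1 + k) by ring] at this
  rw [this]; simp [show 1 + k - 1 = k from by omega, show k + 1 + 1 = 1 + k + 1 by ring]
  ring

include hu0 hu1 hrec in
theorem aux_mod4 (hP : P % 2 = 0) : ∀ k, u (2 * k + 1) % 4 = 1 ∧ u (2 * k) % 2 = 0 := by
  intro k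
  induction k with
  | zero => simp [hu0, hu1]
  | succ k ih =>
      obtain ⟨a, ha⟩ : ∃ a, P = 2 * a := ⟨P / 2, by omega⟩
      have h1 : u (2 * k + 2) = P * u (2 * k + 1) + u (2 * k) := hrec (2 * k)
      have h2 : u (2 * k + 3) = P * u (2 * k + 2) + u (2 * k + 1) := by
        have := hrec (2 * k + 1)
        rw [show 2 * k + 1 + 2 = 2 * k + 3 by ring, show 2 * k + 1 + 1 = 2 * k + 2 by ring] at this
        exact this
      have he : u (2 * k + 2) % 2 = 0 := by
        obtain ⟨b, hb⟩ : ∃ b, u (2 * k + 1) = 2 * b + 1 := ⟨u (2 * k + 1) / 2, by omega⟩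
        have : P * u (2 * k + 1) = 2 * (a * (2 * b + 1)) := by rw [ha, hb]; ring
        omega
      constructor
      · rw [show 2 * (k + 1) + 1 = 2 * k + 3 by ring, h2]
        obtain ⟨b, hb⟩ : ∃ b, u (2 * k + 2) = 2 * b := ⟨u (2 * k + 2) / 2, by omega⟩
        have : P * u (2 * k + 2) = 4 * (a * b) := by rw [ha, hb]; ring
        omega
      · rw [show 2 * (k + 1) = 2 * k + 2 by ring]; exact he

include hu0 hu1 hrec in
theorem aux_pos (hP : 1 ≤ P) : ∀ k, 1 ≤ u (k + 1) := by
  intro k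
  induction k using Nat.twoStepInduction with
  | zero => simp [hu1]
  | one =>
      have h := hrec 0
      rw [hu0, hu1] at h
      have : u (1 + 1) = u (0 + 2) := by norm_num
      rw [this, h]; omega
  | more k ih1 ih2 => rw [show k + 2 + 1 = k + 1 + 2 by ring, hrec]; nlinarith

end Aux

theorem stmt_7 (P : ℕ) (hP : 4 ≤ P) (heven : Even P) (u : ℕ → ℕ)
    (hu0 : u 0 = 0) (hu1 : u 1 = 1)
    (hrec : ∀ n, 2 ≤ n → u n = P * u (n - 1) + u (n - 2))
    (t₁ : ℕ) (ht₁ : t₁ = padicValNat 2 P) :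
    ∀ m j : ℕ, 1 ≤ m → 1 ≤ j → (2 ^ j ∣ m ↔ 2 ^ (j + t₁ - 1) ∣ u m) := by
  have hrec' : ∀ n, u (n + 2) = P * u (n + 1) + u n := by
    intro n; have := hrec (n + 2) (by omega); simpa using this
  clear hrec
  have hP2 : P % 2 = 0 := Nat.even_iff.mp heven
  have hmod4 := aux_mod4 P u hu0 hu1 hrec' hP2
  have hpos : ∀ k, 1 ≤ u (k + 1) := aux_pos P u hu0 hu1 hrec' (by omega)
  have hne : ∀ m, 1 ≤ m → u m ≠ 0 := by
    intro m hm
    obtain ⟨k, hk⟩ : ∃ k, m = k + 1 := ⟨m - 1, by omega⟩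
    subst hk
    have := hpos k; omega
  haveI : Fact (Nat.Prime 2) := ⟨Nat.prime_two⟩
  have ht1pos : 1 ≤ t₁ := by
    rw [ht₁]
    exact one_le_padicValNat_of_dvd (by omega) (Nat.dvd_of_mod_eq_zero hP2)
  have hodd : ∀ k, padicValNat 2 (u (2 * k + 1)) = 0 := by
    intro k
    apply padicValNat.eq_zero_of_not_dvd
    have := (hmod4 k).1; omega
  obtain ⟨P', hP'odd, hPfac⟩ : ∃ P', P' % 2 = 1 ∧ P = 2 ^ t₁ * P' := by
    have h1 : 2 ^ t₁ ∣ P := by rw [ht₁]; exact pow_padicValNat_dvd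
    obtain ⟨P', hP'⟩ := h1
    refine ⟨P', ?_, hP'⟩
    by_contra h
    obtain ⟨c, hc⟩ : ∃ c, P' = 2 * c := ⟨P' / 2, by omega⟩
    have hdvd : 2 ^ (t₁ + 1) ∣ P := ⟨c, by rw [hP', hc]; ring⟩
    have := (padicValNat_dvd_iff_le (p := 2) (by omega : P ≠ 0)).mp hdvd
    omega
  have hval : ∀ (a w : ℕ), w % 2 = 1 → padicValNat 2 (2 ^ a * w) = a := by
    intro a w hw
    rw [padicValNat.mul (pow_ne_zero a two_ne_zero) (by omega),
      padicValNat.prime_pow, padicValNat.eq_zero_of_not_dvd (by omega)]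
    omega
  have hv2a : ∀ a : ℕ, 1 ≤ a → padicValNat 2 (2 * a) = 1 + padicValNat 2 a := by
    intro a ha
    rw [padicValNat.mul two_ne_zero (by omega), padicValNat.self one_lt_two]
  have main : ∀ k, 1 ≤ k → padicValNat 2 (u (2 * k)) = t₁ + padicValNat 2 k := by
    intro k
    induction k using Nat.strong_induction_on with
    | _ k ih =>
      intro hk
      have hdouble := aux_double P u hu0 hu1 hrec' k hk
      rcases Nat.even_or_odd k with hke | hko
      · -- k even, k = 2a, a ≥ 1
        obtain ⟨a, rfl⟩ : ∃ a, k = 2 * a := ⟨k / 2, by rcases hke with ⟨b, hb⟩; omega⟩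
        have ha : 1 ≤ a := by omega
        have hV2 : (u (2 * a + 1) + u (2 * a - 1)) % 4 = 2 := by
          have h1 := (hmod4 a).1
          have h2 := (hmod4 (a - 1)).1
          rw [show 2 * (a - 1) + 1 = 2 * a - 1 by omega] at h2
          omega
        obtain ⟨w, hw, hwodd⟩ : ∃ w, u (2 * a + 1) + u (2 * a - 1) = 2 * w ∧ w % 2 = 1 :=
          ⟨(u (2 * a + 1) + u (2 * a - 1)) / 2, by omega, by omega⟩
        rw [hdouble, padicValNat.mul (hne _ (by omega)) (by omega),
          hw, show (2 : ℕ) * w = 2 ^ 1 * w from by ring, hval 1 w hwodd,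
          ih a (by omega) ha, hv2a a ha]
        omega
      · -- k odd, k = 2a+1
        obtain ⟨a, rfl⟩ := hko
        have hka : padicValNat 2 (2 * a + 1) = 0 :=
          padicValNat.eq_zero_of_not_dvd (by omega)
        have hVeq : u (2 * a + 1 + 1) + u (2 * a + 1 - 1) = P * u (2 * a + 1) + 2 * u (2 * a) := by
          have := hrec' (2 * a)
          rw [show 2 * a + 1 + 1 = 2 * a + 2 by ring, show 2 * a + 1 - 1 = 2 * a by omega, this]
          ring
        have hdvd2a : 2 ^ t₁ ∣ u (2 * a) := by
          rcases Nat.eq_zero_or_pos a with rfl | hapos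
          · simp [hu0]
          · have := ih a (by omega) hapos
            exact (padicValNat_dvd_iff_le (hne _ (by omega))).mpr (by omega)
        obtain ⟨c, hc⟩ := hdvd2a
        have hukodd : u (2 * a + 1) % 2 = 1 := by have := (hmod4 a).1; omega
        have hwodd : (P' * u (2 * a + 1) + 2 * c) % 2 = 1 := by
          obtain ⟨x, hx⟩ : ∃ x, P' = 2 * x + 1 := ⟨P' / 2, by omega⟩
          obtain ⟨y, hy⟩ : ∃ y, u (2 * a + 1) = 2 * y + 1 := ⟨u (2 * a + 1) / 2, by omega⟩
          have : P' * u (2 * a + 1) + 2 * c = 2 * (2 * x * y + x + y + c) + 1 := by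
            rw [hx, hy]; ring
          omega
        have hVfac : u (2 * a + 1 + 1) + u (2 * a + 1 - 1) =
            2 ^ t₁ * (P' * u (2 * a + 1) + 2 * c) := by
          rw [hVeq, hPfac, hc]; ring
        rw [hdouble, padicValNat.mul (hne _ (by omega))
            (by rw [hVfac]; exact Nat.mul_ne_zero (pow_ne_zero _ two_ne_zero) (by omega)),
          hodd a, hVfac, hval _ _ hwodd, hka]
        omega
  intro m j hm hj
  rw [padicValNat_dvd_iff_le (by omega : m ≠ 0), padicValNat_dvd_iff_le (hne m hm)]
  rcases Nat.even_or_odd m with he | ho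
  · obtain ⟨a, rfl⟩ : ∃ a, m = 2 * a := ⟨m / 2, by rcases he with ⟨b, hb⟩; omega⟩
    have ha : 1 ≤ a := by omega
    rw [main a ha, hv2a a ha]
    omega
  · obtain ⟨a, rfl⟩ := ho
    rw [hodd a, padicValNat.eq_zero_of_not_dvd (show ¬(2 ∣ 2 * a + 1) by omega)]
    omega
end

section
/- Let p be an odd prime not dividing P²+4, and let e_p be the p-adic valuation of u_{z(p)}, where z(p) is the least positive index n with p | u_n. Then e_p ≤ ((p+1)·log α + 0.2)/(2·log p), where α = (P+√(P²+4))/2. -/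
private lemma luc_add (P : ℕ) (u : ℕ → ℕ) (hu0 : u 0 = 0) (hu1 : u 1 = 1)
    (hrec : ∀ n, u (n + 2) = P * u (n + 1) + u n) :
    ∀ m n, u (m + n + 1) = u (m + 1) * u (n + 1) + u m * u n := by
  intro m
  induction m using Nat.strong_induction_on with
  | _ m ih =>
    match m with
    | 0 => intro n; simp [hu0, hu1]
    | 1 =>
      intro n
      have h2 : u 2 = P := by rw [hrec 0, hu0, hu1]; ring
      rw [show 1 + n + 1 = n + 2 from by omega, hrec n, h2, hu1]; ring
    | (m+2) =>
      intro n
      rw [show m + 2 + n + 1 = (m + n + 1) + 2 from by omega, hrec (m + n + 1),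
        show m + n + 1 + 1 = (m + 1) + n + 1 from by omega,
        ih (m+1) (by omega) n, ih m (by omega) n,
        show m + 2 + 1 = m + 1 + 2 from by omega, hrec (m+1), hrec m]
      ring

private lemma luc_cat (P : ℕ) (u : ℕ → ℕ) (hu0 : u 0 = 0) (hu1 : u 1 = 1)
    (hrec : ∀ n, u (n + 2) = P * u (n + 1) + u n) :
    ∀ n, ((u (n+1) : ℤ))^2 - (u (n+2)) * (u n) = (-1)^n := by
  intro n
  induction n with
  | zero =>
    have h2 : u 2 = P := by rw [hrec 0, hu0, hu1]; ring
    simp [hu0, hu1, h2]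
  | succ n ih =>
    have kc : ((u (n+2)):ℤ) = P * u (n+1) + u n := by exact_mod_cast hrec n
    have kd : ((u (n+1+2)):ℤ) = P * u (n+1+1) + u (n+1) := by exact_mod_cast hrec (n+1)
    rw [show n + 1 + 1 = n + 2 from by omega] at *
    linear_combination (-1:ℤ)*ih - (u (n+1):ℤ)*kd + (u (n+2):ℤ)*kc

private lemma luc_vsq (P : ℕ) (u : ℕ → ℕ) (hu0 : u 0 = 0) (hu1 : u 1 = 1)
    (hrec : ∀ n, u (n + 2) = P * u (n + 1) + u n) :
    ∀ n, ((u (n+2) + u n : ℤ))^2 - ((P:ℤ)^2+4) * (u (n+1))^2 = 4 * (-1)^(n+1) := by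
  intro n
  have cat := luc_cat P u hu0 hu1 hrec n
  have kc : ((u (n+2)):ℤ) = P * u (n+1) + u n := by exact_mod_cast hrec n
  linear_combination (-4:ℤ)*cat + ((u (n+2):ℤ) - (u n) + P*(u (n+1)))*kc

private lemma luc_pos (P : ℕ) (hP : 1 ≤ P) (u : ℕ → ℕ) (hu0 : u 0 = 0) (hu1 : u 1 = 1)
    (hrec : ∀ n, u (n + 2) = P * u (n + 1) + u n) :
    ∀ n, 1 ≤ u (n + 1) := by
  intro n
  induction n using Nat.strong_induction_on with
  | _ n ih =>
    match n with
    | 0 => simp [hu1]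
    | (n+1) =>
      have h := ih n (by omega)
      rw [hrec n]
      have h2 : 1 * 1 ≤ P * u (n + 1) := Nat.mul_le_mul hP h
      omega

private lemma luc_mat (P : ℕ) (u : ℕ → ℕ) (hu0 : u 0 = 0) (hu1 : u 1 = 1)
    (hrec : ∀ n, u (n + 2) = P * u (n + 1) + u n) (p : ℕ) [Fact p.Prime] :
    ∀ n, (!![(P:ZMod p), 1; 1, 0]) ^ (n+1) = !![(u (n+2) : ZMod p), u (n+1); u (n+1), u n] := by
  intro n
  induction n with
  | zero =>
    have h2 : u 2 = P := by rw [hrec 0, hu0, hu1]; ring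
    rw [pow_one, h2, hu1, hu0]
    push_cast
    rfl
  | succ n ih =>
    rw [pow_succ, ih, Matrix.mul_fin_two]
    have kd : ((u (n+1+2)):ZMod p) = P * u (n+1+1) + u (n+1) := by
      rw [hrec (n+1)]; push_cast; ring
    ext i j
    fin_cases i <;> fin_cases j <;>
        simp [kd, show n+1+1 = n+2 from rfl] <;>
      first
        | (rw [hrec n]; push_cast; ring)
        | ring

private lemma luc_up (P : ℕ) (u : ℕ → ℕ) (hu0 : u 0 = 0) (hu1 : u 1 = 1)
    (hrec : ∀ n, u (n + 2) = P * u (n + 1) + u n) (p : ℕ) [Fact p.Prime]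
    (hp3 : 3 ≤ p) (hpodd : Odd p) (hpD : ¬ p ∣ P ^ 2 + 4) :
    p ∣ u (p+1) ∨ p ∣ u (p-1) := by
  have hp : p.Prime := Fact.out
  have hM := luc_mat P u hu0 hu1 hrec p (p-1)
  rw [show p - 1 + 1 = p from by omega, show p - 1 + 2 = p + 1 from by omega] at hM
  have htr := ZMod.trace_pow_card (!![(P:ZMod p), 1; 1, 0])
  rw [hM] at htr
  simp only [Matrix.trace_fin_two_of] at htr
  have hvP : ((u (p+1) : ZMod p)) + (u (p-1)) = (P : ZMod p) := by
    rw [htr, add_zero, ZMod.pow_card]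
  have hvsq := luc_vsq P u hu0 hu1 hrec (p-1)
  rw [show p - 1 + 2 = p + 1 from by omega, show p - 1 + 1 = p from by omega,
    hpodd.neg_one_pow] at hvsq
  have hvsqZ : ((u (p+1) : ZMod p) + (u (p-1)))^2 - ((P:ZMod p)^2+4) * (u p)^2 = -4 := by
    have h := congrArg (fun x : ℤ => (x : ZMod p)) hvsq
    push_cast at h
    linear_combination h
  rw [hvP] at hvsqZ
  have hD0 : ((P:ZMod p)^2 + 4) ≠ 0 := by
    intro hc
    apply hpD
    have : ((P^2 + 4 : ℕ) : ZMod p) = 0 := by push_cast; exact hc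
    exact (CharP.cast_eq_zero_iff (ZMod p) p _).mp this
  have hup2 : ((u p : ZMod p))^2 = 1 := by
    have h4 : ((P:ZMod p)^2 + 4) * ((u p : ZMod p)^2 - 1) = 0 := by
      linear_combination -hvsqZ
    rcases mul_eq_zero.mp h4 with h | h
    · exact absurd h hD0
    · exact sub_eq_zero.mp h
  have hcat := luc_cat P u hu0 hu1 hrec (p-1)
  rw [show p - 1 + 2 = p + 1 from by omega, show p - 1 + 1 = p from by omega] at hcat
  have hcatZ : ((u p : ZMod p))^2 - (u (p+1) : ZMod p) * (u (p-1)) = (-1)^(p-1) := by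
    have h := congrArg (fun x : ℤ => (x : ZMod p)) hcat
    push_cast at h
    linear_combination h
  have hpe : Even (p - 1) := by
    rcases hpodd with ⟨k, hk⟩; exact ⟨k, by omega⟩
  rw [hpe.neg_one_pow, hup2] at hcatZ
  have hz : (u (p+1) : ZMod p) * (u (p-1)) = 0 := by linear_combination -hcatZ
  rcases mul_eq_zero.mp hz with h | h
  · exact Or.inl ((CharP.cast_eq_zero_iff (ZMod p) p _).mp h)
  · exact Or.inr ((CharP.cast_eq_zero_iff (ZMod p) p _).mp h)

set_option maxHeartbeats 1000000 in
theorem stmt_8 (P : ℕ) (hP : 3 ≤ P) (u : ℕ → ℕ)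
    (hu0 : u 0 = 0) (hu1 : u 1 = 1)
    (hrec : ∀ n, 2 ≤ n → u n = P * u (n - 1) + u (n - 2))
    (α : ℝ) (hα : α = (P + Real.sqrt (P ^ 2 + 4)) / 2)
    (p : ℕ) (hp : p.Prime) (hpodd : Odd p) (hpD : ¬ p ∣ P ^ 2 + 4)
    (z : ℕ) (hz1 : 1 ≤ z) (hzdvd : p ∣ u z)
    (hzmin : ∀ k, 1 ≤ k → p ∣ u k → z ≤ k)
    (e : ℕ) (he : e = padicValNat p (u z)) :
    (e : ℝ) ≤ ((p + 1) * Real.log α + 0.2) / (2 * Real.log p) := by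
  haveI : Fact p.Prime := ⟨hp⟩
  have hrec' : ∀ n, u (n + 2) = P * u (n + 1) + u n := by
    intro n
    have h := hrec (n + 2) (by omega)
    rw [show n + 2 - 1 = n + 1 from by omega, show n + 2 - 2 = n from by omega] at h
    exact h
  have hp3 : 3 ≤ p := by
    rcases hpodd with ⟨k, hk⟩
    have := hp.two_le
    omega
  -- facts about α
  have hPR : (3:ℝ) ≤ (P:ℝ) := by exact_mod_cast hP
  have hD4 : (0:ℝ) ≤ (P:ℝ)^2 + 4 := by positivity
  have hsq : Real.sqrt ((P:ℝ)^2+4) ^ 2 = (P:ℝ)^2 + 4 := Real.sq_sqrt hD4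
  have hs0 : (0:ℝ) ≤ Real.sqrt ((P:ℝ)^2+4) := Real.sqrt_nonneg _
  have hs36 : (3.6:ℝ) ≤ Real.sqrt ((P:ℝ)^2+4) := by nlinarith [hsq, hs0, hPR]
  have hsP : (P:ℝ) ≤ Real.sqrt ((P:ℝ)^2+4) := by nlinarith [hsq, hs0, hPR]
  have hα2 : α^2 = P*α + 1 := by
    rw [hα]; field_simp; nlinarith [hsq]
  have hαP : (P:ℝ) ≤ α := by rw [hα]; linarith
  have hα33 : (3.3:ℝ) ≤ α := by rw [hα]; linarith
  have hα1 : (1:ℝ) ≤ α := by linarith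
  have hα0 : (0:ℝ) < α := by linarith
  have hαsq : (10.9:ℝ) ≤ α^2 := by nlinarith [hα2, hPR, hα33]
  -- growth : u (n+1) ≤ α^n
  have grow : ∀ n, (u (n+1) : ℝ) ≤ α ^ n := by
    intro n
    induction n using Nat.strong_induction_on with
    | _ n ih =>
      match n with
      | 0 => simp [hu1]
      | 1 =>
        have h2 : u 2 = P := by rw [hrec' 0, hu0, hu1]; ring
        rw [h2, pow_one]; exact hαP
      | (n+2) =>
        rw [show n+2+1 = (n+1)+2 from by omega, hrec' (n+1)]
        have h1 := ih (n+1) (by omega)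
        have h2 := ih n (by omega)
        have hpow : α^(n+2) = P * α^(n+1) + α^n := by
          have h : α^(n+2) = α^n * α^2 := by ring
          rw [h, hα2]; ring
        rw [hpow]
        push_cast
        have hPn : (0:ℝ) ≤ (P:ℝ) := by linarith
        have h3 := mul_le_mul_of_nonneg_left h1 hPn
        linarith
  have upos : ∀ n, 1 ≤ u (n + 1) := luc_pos P (by omega) u hu0 hu1 hrec'
  -- apparition
  have happ : ∀ n, 1 ≤ n → p ∣ u n → z ∣ n := by
    intro n
    induction n using Nat.strong_induction_on with
    | _ n ih =>
      intro hn hdvd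
      have hzn : z ≤ n := hzmin n hn hdvd
      rcases eq_or_lt_of_le hzn with h | h
      · exact h ▸ dvd_refl z
      · by_cases hz2 : z = 1
        · simp [hz2]
        · have hz2' : 2 ≤ z := by omega
          have hid := luc_add P u hu0 hu1 hrec' (n - z) (z - 1)
          rw [show n - z + (z-1) + 1 = n from by omega, show z - 1 + 1 = z from by omega] at hid
          have hpz1 : ¬ p ∣ u (z-1) := by
            intro hc
            have := hzmin (z-1) (by omega) hc
            omega
          have h1 : p ∣ u (n - z + 1) * u z := Dvd.dvd.mul_left hzdvd _
          rw [hid] at hdvd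
          have h2 : p ∣ u (n - z) * u (z-1) := (Nat.dvd_add_right h1).mp hdvd
          have h3 : p ∣ u (n - z) := (hp.dvd_mul.mp h2).resolve_right hpz1
          have h4 : z ∣ n - z := ih (n - z) (by omega) (by omega) h3
          have h5 : z ∣ (n - z) + z := h4.add (dvd_refl z)
          rwa [show n - z + z = n from by omega] at h5
  -- a witness index m₀ ∈ {p-1, p+1} with p ∣ u m₀
  obtain ⟨m₀, hm₀1, hm₀2, hm₀e, hm₀d⟩ :
      ∃ m₀, 2 ≤ m₀ ∧ m₀ ≤ p + 1 ∧ 2 ∣ m₀ ∧ p ∣ u m₀ := by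
    rcases luc_up P u hu0 hu1 hrec' p hp3 hpodd hpD with h | h
    · rcases hpodd with ⟨k, hk⟩
      exact ⟨p+1, by omega, by omega, ⟨k+1, by omega⟩, h⟩
    · rcases hpodd with ⟨k, hk⟩
      exact ⟨p-1, by omega, by omega, ⟨k, by omega⟩, h⟩
  have hα1p : (1:ℝ) ≤ α^(p+1) := by
    calc (1:ℝ) = 1^(p+1) := (one_pow _).symm
    _ ≤ α^(p+1) := pow_le_pow_left₀ (by norm_num) hα1 _
  -- key bound
  have hple : ((p:ℝ))^e * (p:ℝ)^e ≤ 1.2 * α^(p+1) := by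
    by_cases hcase : 2*z ≤ p + 1
    · -- small z
      have hdv : p ^ e ∣ u z := he ▸ pow_padicValNat_dvd
      have huz1 : 1 ≤ u z := by
        have := upos (z-1); rwa [show z-1+1 = z from by omega] at this
      have hle : p ^ e ≤ u z := Nat.le_of_dvd (by omega) hdv
      have hleR : ((p:ℝ))^e ≤ α^(z-1) := by
        calc ((p:ℝ))^e ≤ (u z : ℝ) := by exact_mod_cast hle
        _ ≤ α^(z-1) := by
            have := grow (z-1); rwa [show z-1+1 = z from by omega] at this
      have hnn : (0:ℝ) ≤ (p:ℝ)^e := by positivity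
      calc ((p:ℝ))^e * (p:ℝ)^e ≤ α^(z-1) * α^(z-1) := mul_self_le_mul_self hnn hleR
      _ = α^((z-1)+(z-1)) := (pow_add α _ _).symm
      _ ≤ α^(p+1) := pow_le_pow_right₀ hα1 (by omega)
      _ ≤ 1.2 * α^(p+1) := by linarith
    · -- z = m₀, even
      have hzm : z ∣ m₀ := happ m₀ (by omega) hm₀d
      have hzeq : z = m₀ := by
        rcases hzm with ⟨k, hk⟩
        have hzle : z ≤ m₀ := hzmin m₀ (by omega) hm₀d
        have hk1 : k ≠ 0 := by rintro rfl; simp at hk; omega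
        have hk2 : k < 2 := by
          by_contra hc
          push_neg at hc
          have h2z : 2 * z ≤ m₀ := by rw [hk]; nlinarith
          omega
        have hk3 : k = 1 := by omega
        rw [hk3] at hk; omega
      obtain ⟨m, hm⟩ := hm₀e
      have hm1' : 1 ≤ m := by omega
      have hid := luc_add P u hu0 hu1 hrec' m (m-1)
      rw [show m + (m-1) + 1 = 2*m from by omega, show m-1+1 = m from by omega] at hid
      set w := u (m+1) + u (m-1) with hw
      have huz : u z = u m * w := by
        rw [hzeq, hm, hid, hw]; ring
      have hpum : ¬ p ∣ u m := by
        intro hc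
        have := hzmin m (by omega) hc
        omega
      have hum0 : u m ≠ 0 := by
        have := upos (m-1); rw [show m-1+1 = m from by omega] at this; omega
      have hw0 : w ≠ 0 := by
        have := upos m; omega
      have hee : e = padicValNat p w := by
        rw [he, huz, padicValNat.mul hum0 hw0,
          padicValNat.eq_zero_of_not_dvd hpum, zero_add]
      have hdw : p ^ e ∣ w := hee ▸ pow_padicValNat_dvd
      have hlew : p ^ e ≤ w := Nat.le_of_dvd (by omega) hdw
      have hnn : (0:ℝ) ≤ (p:ℝ)^e := by positivity
      by_cases hm1 : m = 1
      · have h2 : u 2 = P := by rw [hrec' 0, hu0, hu1]; ring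
        have hwP : w = P := by rw [hw, hm1]; norm_num [h2, hu0]
        have hleR : ((p:ℝ))^e ≤ α := by
          calc ((p:ℝ))^e ≤ (w:ℝ) := by exact_mod_cast hlew
          _ = (P:ℝ) := by rw [hwP]
          _ ≤ α := hαP
        have hq1 : ((p:ℝ))^e * (p:ℝ)^e ≤ α*α := mul_self_le_mul_self hnn hleR
        have hq2 : α*α = α^2 := by ring
        have hq3 : α^2 ≤ α^(p+1) := pow_le_pow_right₀ hα1 (by omega)
        linarith
      · have hm2 : 2 ≤ m := by omega
        obtain ⟨k, hk⟩ : ∃ k, m = k + 2 := ⟨m-2, by omega⟩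
        have hw1 : (u (m+1) : ℝ) ≤ α ^ (k+2) := by
          rw [hk]; exact grow (k+2)
        have hw2 : (u (m-1) : ℝ) ≤ α^k := by
          have := grow k; rwa [show k+1 = m-1 from by omega] at this
        have hwR : (w:ℝ) ≤ α^(k+2) + α^k := by
          have hcast : (w:ℝ) = (u (m+1):ℝ) + (u (m-1):ℝ) := by rw [hw]; push_cast; ring
          rw [hcast]
          linarith
        have hleR : ((p:ℝ))^e ≤ α^(k+2) + α^k := by
          calc ((p:ℝ))^e ≤ (w:ℝ) := by exact_mod_cast hlew
          _ ≤ _ := hwR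
        have hx : 2*(α^2) + 1 ≤ 0.2*(α^2)^2 := by nlinarith [hαsq]
        have key : (α^(k+2) + α^k)^2 ≤ 1.2 * α^(2*k+4) := by
          have e1 : α^(k+2) = α^k * α^2 := by ring
          have e2 : α^(2*k+4) = (α^k)^2 * (α^2)^2 := by ring
          rw [e1, e2]
          nlinarith [mul_le_mul_of_nonneg_left hx (sq_nonneg (α^k)), sq_nonneg (α^k)]
        have hmono : α^(2*k+4) ≤ α^(p+1) := by
          apply pow_le_pow_right₀ hα1
          omega
        have hsq2 : ((p:ℝ))^e * (p:ℝ)^e ≤ (α^(k+2) + α^k) * (α^(k+2) + α^k) :=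
          mul_self_le_mul_self hnn hleR
        have hBB : (α^(k+2) + α^k) * (α^(k+2) + α^k) = (α^(k+2) + α^k)^2 := by ring
        linarith
  -- conclude via logarithms
  have hpR : (0:ℝ) < (p:ℝ) := by exact_mod_cast hp.pos
  have hlogp : (0:ℝ) < Real.log p := Real.log_pos (by exact_mod_cast hp.one_lt)
  have hppos : (0:ℝ) < (p:ℝ)^e := pow_pos hpR e
  have hlog1 : Real.log ((p:ℝ)^e * (p:ℝ)^e) ≤ Real.log (1.2 * α^(p+1)) :=
    Real.log_le_log (by positivity) hple
  have hL : Real.log ((p:ℝ)^e * (p:ℝ)^e) = 2 * ((e:ℝ) * Real.log p) := by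
    rw [Real.log_mul hppos.ne' hppos.ne', Real.log_pow]; ring
  have hR : Real.log (1.2 * α^(p+1)) = Real.log 1.2 + ((p:ℝ)+1) * Real.log α := by
    rw [Real.log_mul (by norm_num) (pow_pos hα0 _).ne', Real.log_pow]; push_cast; ring
  have hlog12 : Real.log 1.2 ≤ 0.2 := by
    have := Real.log_le_sub_one_of_pos (show (0:ℝ) < 1.2 by norm_num)
    linarith
  rw [le_div_iff₀ (by linarith)]
  rw [hL, hR] at hlog1
  linarith
end

section
/- If p is a prime dividing P²+4, then z(p) = p, i.e. p is the least positive index n with p dividing u_n. -/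
theorem stmt_10 (P : ℕ) (hP : 3 ≤ P) (u : ℕ → ℕ)
    (hu0 : u 0 = 0) (hu1 : u 1 = 1)
    (hrec : ∀ n, 2 ≤ n → u n = P * u (n - 1) + u (n - 2))
    (p : ℕ) (hp : p.Prime) (hpD : p ∣ P ^ 2 + 4) :
    p ∣ u p ∧ ∀ k, 1 ≤ k → p ∣ u k → p ≤ k := by
  have hrec' : ∀ n, u (n+2) = P * u (n+1) + u n := by
    intro n
    simpa using hrec (n+2) (by omega)
  by_cases hp2 : p = 2
  · subst hp2
    have hPeven : 2 ∣ P := by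
      rcases Nat.even_or_odd P with h | h
      · exact h.two_dvd
      · exfalso
        have h1 : Odd (P ^ 2 + 4) := by
          have := h.pow (n := 2)
          rcases this with ⟨m, hm⟩
          exact ⟨m + 2, by omega⟩
        rcases h1 with ⟨m, hm⟩
        omega
    constructor
    · have h2 : u 2 = P := by
        have := hrec' 0
        simp [hu0, hu1] at this
        omega
      rw [h2]; exact hPeven
    · intro k hk hdvd
      by_contra h
      have : k = 1 := by omega
      subst this
      simp [hu1] at hdvd
  · haveI : Fact p.Prime := ⟨hp⟩
    have h2ne : (2 : ZMod p) ≠ 0 := by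
      have : ((2 : ℕ) : ZMod p) ≠ 0 := by
        rw [Ne, ZMod.natCast_eq_zero_iff]
        intro h
        exact hp2 ((Nat.prime_dvd_prime_iff_eq hp Nat.prime_two).mp h)
      simpa using this
    set α : ZMod p := (P : ZMod p) * (2 : ZMod p)⁻¹ with hα
    have h2α : (2 : ZMod p) * α = (P : ZMod p) := by
      rw [hα]; field_simp
    have hP2 : ((P : ZMod p)) ^ 2 = -4 := by
      have : ((P ^ 2 + 4 : ℕ) : ZMod p) = 0 := by
        rw [ZMod.natCast_eq_zero_iff]; exact hpD
      push_cast at this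
      linear_combination this
    have hα2 : α ^ 2 = -1 := by
      have h4 : (4 : ZMod p) ≠ 0 := by
        have : (4 : ZMod p) = 2 * 2 := by norm_num
        rw [this]; exact mul_ne_zero h2ne h2ne
      have : (4 : ZMod p) * α ^ 2 = (P : ZMod p) ^ 2 := by
        have : ((2 : ZMod p) * α) ^ 2 = (P : ZMod p) ^ 2 := by rw [h2α]
        linear_combination this
      rw [hP2] at this
      exact mul_left_cancel₀ h4 (by linear_combination this)
    have hPα : (P : ZMod p) * α = α ^ 2 - 1 := by
      linear_combination (-α) * h2α + hα2
    have key : ∀ n, ((u n : ZMod p)) * α = (n : ZMod p) * α ^ n := by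
      intro n
      induction n using Nat.twoStepInduction with
      | zero => simp [hu0]
      | one => simp [hu1]
      | more n ih1 ih2 =>
        rw [hrec' n]
        push_cast
        calc ((P : ZMod p) * (u (n+1) : ZMod p) + (u n : ZMod p)) * α
            = (P : ZMod p) * ((u (n+1) : ZMod p) * α) + (u n : ZMod p) * α := by ring
          _ = (P : ZMod p) * (((n:ZMod p)+1) * α ^ (n+1)) + (n : ZMod p) * α ^ n := by
              rw [ih2, ih1]; push_cast; ring_nf
          _ = ((n:ZMod p) + 2) * α ^ (n + 2) := by
              linear_combination ((n : ZMod p) + 1) * α ^ n * hPα + (-(α ^ n)) * hα2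
    have hαne : α ≠ 0 := by
      intro h
      rw [h] at hα2
      simp at hα2
    constructor
    · have := key p
      rw [ZMod.natCast_self, zero_mul] at this
      have h0 : (u p : ZMod p) = 0 := by
        rcases mul_eq_zero.mp this with h | h
        · exact h
        · exact absurd h hαne
      exact (ZMod.natCast_eq_zero_iff _ _).mp h0
    · intro k hk hdvd
      have h0 : (u k : ZMod p) = 0 := (ZMod.natCast_eq_zero_iff _ _).mpr hdvd
      have := key k
      rw [h0, zero_mul] at this
      have hk0 : (k : ZMod p) = 0 := by
        rcases mul_eq_zero.mp this.symm with h | h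
        · exact h
        · exact absurd (pow_eq_zero_iff (by omega : k ≠ 0) |>.mp h) hαne
      have : p ∣ k := (ZMod.natCast_eq_zero_iff _ _).mp hk0
      exact Nat.le_of_dvd (by omega) this
end

section
/- If n is odd and q is an odd prime dividing u_n, then q ≡ 1 (mod 4). -/
private def UU (P : ℕ) : ℕ → ℤ
  | 0 => 0
  | 1 => 1
  | (n+2) => P * UU P (n+1) + UU P n

private lemma cassini (P : ℕ) : ∀ m, UU P m * UU P (m+2) - (UU P (m+1))^2 = (-1)^(m+1) := by
  intro m
  induction m with
  | zero => simp [UU]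
  | succ k ih =>
      have h1 : UU P (k+2) = P * UU P (k+1) + UU P k := rfl
      have h2 : UU P (k+3) = P * UU P (k+2) + UU P (k+1) := rfl
      rw [show k+1+2 = k+3 from rfl, show k+1+1 = k+2 from rfl, pow_succ ((-1:ℤ)) (k+1)]
      linear_combination (-1) * ih + UU P (k+1) * h2 - UU P (k+2) * h1

theorem stmt_11 (P : ℕ) (hP : 3 ≤ P) (u : ℕ → ℕ)
    (hu0 : u 0 = 0) (hu1 : u 1 = 1)
    (hrec : ∀ n, 2 ≤ n → u n = P * u (n - 1) + u (n - 2))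
    (n : ℕ) (hn : Odd n) (q : ℕ) (hq : q.Prime) (hqodd : Odd q)
    (hdvd : q ∣ u n) :
    q % 4 = 1 := by
  -- u agrees with UU
  have hU : ∀ m, (u m : ℤ) = UU P m := by
    have key : ∀ m, (u m : ℤ) = UU P m ∧ (u (m+1) : ℤ) = UU P (m+1) := by
      intro m
      induction m with
      | zero => simp [hu0, hu1, UU]
      | succ k ih =>
          refine ⟨ih.2, ?_⟩
          have h := hrec (k+2) (by omega)
          simp only [show k+2-1 = k+1 from rfl, show k+2-2 = k from rfl] at h
          have : UU P (k+2) = P * UU P (k+1) + UU P k := rfl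
          rw [h, this]
          push_cast
          rw [ih.1, ih.2]
    exact fun m => (key m).1
  obtain ⟨k, hk⟩ := hn
  subst hk
  set D : ℤ := (P:ℤ)^2 + 4 with hD
  set v : ℤ := P * UU P (2*k+1) + 2 * UU P (2*k) with hv
  have hrec2 : UU P (2*k+2) = P * UU P (2*k+1) + UU P (2*k) := rfl
  have hcas := cassini P (2*k)
  have key : v^2 - D * (UU P (2*k+1))^2 = -4 := by
    have hsign : ((-1:ℤ))^(2*k+1) = -1 := by
      rw [pow_succ]; simp [pow_mul]
    rw [hsign] at hcas
    linear_combination 4*hcas - 4*(UU P (2*k))*hrec2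
  -- move to ZMod q
  haveI : Fact q.Prime := ⟨hq⟩
  have hq2 : (2 : ZMod q) ≠ 0 := by
    have h2' : ((2:ℕ) : ZMod q) ≠ 0 := by
      rw [Ne, ZMod.natCast_eq_zero_iff]
      intro h
      have := (Nat.prime_dvd_prime_iff_eq hq Nat.prime_two).1 h
      obtain ⟨j, hj⟩ := hqodd
      omega
    simpa using h2' 
  have hu0' : ((UU P (2*k+1) : ℤ) : ZMod q) = 0 := by
    rw [← hU (2*k+1)]
    have : ((u (2*k+1) : ℕ) : ZMod q) = 0 := (ZMod.natCast_eq_zero_iff _ _).2 hdvd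
    exact_mod_cast this
  have hveq : ((v : ℤ) : ZMod q)^2 = -4 := by
    have := congrArg (fun x : ℤ => (x : ZMod q)) key
    push_cast at this
    rw [hu0'] at this
    linear_combination this
  have hsq : IsSquare (-1 : ZMod q) := by
    refine ⟨((v : ℤ) : ZMod q) * (2 : ZMod q)⁻¹, ?_⟩
    have h4 : (2 : ZMod q) * (2 : ZMod q)⁻¹ = 1 := mul_inv_cancel₀ hq2
    field_simp
    linear_combination -hveq
  have h3 : q % 4 ≠ 3 := (ZMod.exists_sq_eq_neg_one_iff).1 hsq
  obtain ⟨j, hj⟩ := hqodd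
  omega
end

section
/- If P is odd and m ≡ 3 (mod 6), then u_m ≡ 2 (mod 4). -/
theorem stmt_14 (P : ℕ) (hP : 3 ≤ P) (hodd : Odd P) (u : ℕ → ℕ)
    (hu0 : u 0 = 0) (hu1 : u 1 = 1)
    (hrec : ∀ n, 2 ≤ n → u n = P * u (n - 1) + u (n - 2))
    (m : ℕ) (hm : m % 6 = 3) :
    u m % 4 = 2 := by
  have hPodd : P % 2 = 1 := Nat.odd_iff.mp hodd
  have hP4 : P % 4 = 1 ∨ P % 4 = 3 := by omega
  have key : ∀ n, u n % 4 =
      if n % 6 = 0 then 0 else if n % 6 = 1 then 1 else if n % 6 = 2 then P % 4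
      else if n % 6 = 3 then 2 else if n % 6 = 4 then 3 * P % 4 else 1 := by
    intro n
    induction n using Nat.strong_induction_on with
    | _ n ih =>
      match n with
      | 0 => simp [hu0]
      | 1 => simp [hu1]
      | (k+2) =>
        have h : u (k+2) = P * u (k+1) + u k := by
          have := hrec (k+2) (by omega)
          simpa using this
        have h1 := ih (k+1) (by omega)
        have h2 := ih k (by omega)
        rw [h, Nat.add_mod, Nat.mul_mod, h1, h2]
        have hk6 : k % 6 = 0 ∨ k % 6 = 1 ∨ k % 6 = 2 ∨ k % 6 = 3 ∨ k % 6 = 4 ∨ k % 6 = 5 := by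
          omega
        rcases hk6 with hk | hk | hk | hk | hk | hk <;>
          [ (have e1 : (k+1) % 6 = 1 := by omega);
            (have e1 : (k+1) % 6 = 2 := by omega);
            (have e1 : (k+1) % 6 = 3 := by omega);
            (have e1 : (k+1) % 6 = 4 := by omega);
            (have e1 : (k+1) % 6 = 5 := by omega);
            (have e1 : (k+1) % 6 = 0 := by omega) ] <;>
          [ (have e2 : (k+2) % 6 = 2 := by omega);
            (have e2 : (k+2) % 6 = 3 := by omega);
            (have e2 : (k+2) % 6 = 4 := by omega);
            (have e2 : (k+2) % 6 = 5 := by omega);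
            (have e2 : (k+2) % 6 = 0 := by omega);
            (have e2 : (k+2) % 6 = 1 := by omega) ] <;>
          simp only [hk, e1, e2] <;>
          norm_num <;>
          rcases hP4 with hq | hq <;>
          simp [Nat.add_mod, Nat.mul_mod, hq]
  have := key m
  rw [hm] at this
  simpa using this
end

section
/- If n > 1 and φ(u_n) = u_m, then u_n is not a prime power q^γ with q an odd prime. (Indeed, if u_n = q^γ then u_m/u_n = 1 − 1/q ≥ 2/3 while u_{n-1}/u_n < 1/2, a contradiction since u_m ≤ u_{n-1}.) -/
theorem stmt_15 (P : ℕ) (hP : 3 ≤ P) (u : ℕ → ℕ)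
    (hu0 : u 0 = 0) (hu1 : u 1 = 1)
    (hrec : ∀ n, 2 ≤ n → u n = P * u (n - 1) + u (n - 2))
    (n m : ℕ) (hn : 1 < n) (h : Nat.totient (u n) = u m) :
    ¬ ∃ (q γ : ℕ), q.Prime ∧ Odd q ∧ 1 ≤ γ ∧ u n = q ^ γ := by
  -- positivity
  have hpos : ∀ k, 1 ≤ k → 1 ≤ u k := by
    intro k hk
    induction k using Nat.strong_induction_on with
    | _ k ih =>
      rcases Nat.lt_or_ge k 2 with hk2 | hk2
      · have hk1 : k = 1 := by omega
        simp [hk1, hu1]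
      · have h1 : 1 ≤ u (k - 1) := ih (k - 1) (by omega) (by omega)
        have := hrec k hk2
        nlinarith
  -- growth
  have hstep : ∀ k, 2 ≤ k → 2 * u (k - 1) < u k := by
    intro k hk
    have h1 : 1 ≤ u (k - 1) := hpos (k - 1) (by omega)
    have := hrec k hk
    nlinarith
  -- monotone
  have hsucc : ∀ k, 1 ≤ k → u k < u (k + 1) := by
    intro k hk
    have hs := hstep (k + 1) (by omega)
    simp only [Nat.add_sub_cancel] at hs
    have := hpos k hk
    omega
  have hmono : ∀ a b, 1 ≤ a → a ≤ b → u a ≤ u b := by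
    intro a b ha hab
    induction b, hab using Nat.le_induction with
    | base => exact le_refl _
    | succ b hb ih =>
      have := hsucc b (le_trans ha hb)
      omega
  have hsmono : ∀ a b, 1 ≤ a → a < b → u a < u b := by
    intro a b ha hab
    have h1 := hmono a (b - 1) ha (by omega)
    have h2 := hstep b (by omega)
    have := hpos a ha
    omega
  rintro ⟨q, γ, hq, hodd, hγ, hun⟩
  have hq3 : 3 ≤ q := by
    have h2 := hq.two_le
    rcases Nat.lt_or_ge q 3 with h3 | h3
    · have : q = 2 := by omega
      rw [this] at hodd
      exact absurd hodd (by decide)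
    · exact h3
  have hu2 : u 2 = P := by
    have := hrec 2 (by omega)
    simp [hu0, hu1] at this
    omega
  have hun3 : 3 ≤ u n := by
    have := hmono 2 n (by omega) hn
    omega
  have humpos : 1 ≤ u m := by
    rw [← h]
    exact Nat.totient_pos.mpr (by omega)
  have hm1 : 1 ≤ m := by
    rcases Nat.eq_zero_or_pos m with hm0 | hm0
    · rw [hm0, hu0] at humpos; omega
    · exact hm0
  have humlt : u m < u n := by
    rw [← h]
    exact Nat.totient_lt (u n) (by omega)
  have hmn : m < n := by
    by_contra hc
    have := hmono n m (by omega) (by omega)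
    omega
  have h1 : u m ≤ u (n - 1) := hmono m (n - 1) hm1 (by omega)
  have h2 : 2 * u (n - 1) < u n := hstep n (by omega)
  -- totient of prime power
  have htot : Nat.totient (q ^ γ) = q ^ (γ - 1) * (q - 1) :=
    Nat.totient_prime_pow hq hγ
  have hpow : q ^ (γ - 1) * q = q ^ γ := by
    rw [← pow_succ]
    congr 1
    omega
  have hpowpos : 1 ≤ q ^ (γ - 1) := Nat.one_le_pow _ _ (by omega)
  have h3 : 2 * q ^ γ ≤ 3 * (q ^ (γ - 1) * (q - 1)) := by
    rw [← hpow]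
    have hd : 2 * q ≤ 3 * (q - 1) := by omega
    calc 2 * (q ^ (γ - 1) * q) = q ^ (γ - 1) * (2 * q) := by ring
      _ ≤ q ^ (γ - 1) * (3 * (q - 1)) := Nat.mul_le_mul_left _ hd
      _ = 3 * (q ^ (γ - 1) * (q - 1)) := by ring
  rw [hun, htot] at h
  omega
end

section
/- If n > 1 and φ(u_n) = u_m for some m < n, then m is even. -/
/-!
Since `u n ≥ u 2 = P ≥ 3`, `φ (u n) = u m` is even. For even `P` the sequence satisfies
`u k ≡ k [MOD 2]`, so `m` is even. For odd `P` the sequence has period 6 modulo 4 and is never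
divisible by 4 at odd indices. So if `m` were odd, `4 ∤ φ (u n)`, which forces `u n` to be a power
of 2 or `p ^ k` or `2 p ^ k` with `p` an odd prime, hence `u n ≤ 3 φ (u n) = 3 u m`. This
contradicts `3 u m ≤ 3 u (n - 1) < P u (n - 1) + u (n - 2) = u n`.
-/

open Nat

theorem Nat.two_mul_prime_pow_le_three_mul_totient {p : ℕ} (hp : p.Prime) (hp2 : p ≠ 2) (k : ℕ) :
    2 * p ^ (k + 1) ≤ 3 * φ (p ^ (k + 1)) := by
  have hp3 : 2 * p ≤ 3 * (p - 1) := by have := hp.two_le; omega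
  rw [totient_prime_pow_succ hp, pow_succ]
  calc 2 * (p ^ k * p) = p ^ k * (2 * p) := by ring
    _ ≤ p ^ k * (3 * (p - 1)) := Nat.mul_le_mul_left _ hp3
    _ = 3 * (p ^ k * (p - 1)) := by ring

theorem Nat.le_three_mul_totient_of_not_four_dvd {N : ℕ} (h4 : ¬ 4 ∣ φ N) : N ≤ 3 * φ N := by
  have hN0 : N ≠ 0 := by rintro rfl; simp at h4
  by_cases hodd : ∃ p, p.Prime ∧ p ∣ N ∧ p ≠ 2
  · obtain ⟨p, hp, hpN, hp2⟩ := hodd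
    obtain ⟨e, K, hpK, rfl⟩ := exists_eq_pow_mul_and_not_dvd hN0 p hp.one_lt.ne'
    obtain ⟨k, rfl⟩ : ∃ k, e = k + 1 :=
      exists_eq_succ_of_ne_zero (by rintro rfl; simp_all)
    have hK0 : 0 < K := pos_of_ne_zero (by rintro rfl; exact hpK (dvd_zero p))
    rw [totient_mul ((hp.coprime_iff_not_dvd.mpr hpK).pow_left _)] at h4 ⊢
    have hK2 : K ≤ 2 := by
      by_contra! hK
      have hpk : 2 < p ^ (k + 1) :=
        (show 2 < p by have := hp.two_le; omega).trans_le (le_self_pow₀ hp.one_le (by omega))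
      exact h4 (mul_dvd_mul (totient_even hpk).two_dvd (totient_even hK).two_dvd)
    calc p ^ (k + 1) * K ≤ 2 * p ^ (k + 1) := by rw [mul_comm]; exact Nat.mul_le_mul_right _ hK2
      _ ≤ 3 * φ (p ^ (k + 1)) := two_mul_prime_pow_le_three_mul_totient hp hp2 k
      _ ≤ 3 * (φ (p ^ (k + 1)) * φ K) :=
        Nat.mul_le_mul_left _ (Nat.le_mul_of_pos_right _ (totient_pos.mpr hK0))
  · push Not at hodd
    rw [eq_prime_pow_of_unique_prime_dvd hN0 fun hp hpN => hodd _ hp hpN]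
    cases N.primeFactorsList.length with
    | zero => simp
    | succ a => rw [totient_prime_pow_succ prime_two, pow_succ]; omega

theorem Odd.sq_natCast_zmod_four_eq_one {n : ℕ} (hn : Odd n) : (n : ZMod 4) ^ 2 = 1 := by
  obtain ⟨t, rfl⟩ := hn
  push_cast
  generalize (t : ZMod 4) = s
  revert s
  decide

structure IsLucasSeq (P : ℕ) (u : ℕ → ℕ) : Prop where
  zero : u 0 = 0
  one : u 1 = 1
  add_two : ∀ k, u (k + 2) = P * u (k + 1) + u k

namespace IsLucasSeq

variable {P : ℕ} {u : ℕ → ℕ}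

theorem two (h : IsLucasSeq P u) : u 2 = P := by
  simp [h.add_two 0, h.zero, h.one]

theorem monotoneOn (h : IsLucasSeq P u) (hP : 1 ≤ P) : MonotoneOn u (Set.Ici 1) :=
  monotoneOn_nat_Ici_of_le_succ fun k hk => by
    obtain ⟨j, rfl⟩ : ∃ j, k = j + 1 := ⟨k - 1, by omega⟩
    rw [h.add_two j]
    exact le_add_right (Nat.le_mul_of_pos_left _ hP)

theorem pos (h : IsLucasSeq P u) (hP : 1 ≤ P) {k : ℕ} (hk : 1 ≤ k) : 0 < u k :=
  Nat.one_pos.trans_le (h.one ▸ h.monotoneOn hP (Set.mem_Ici.mpr le_rfl) hk hk)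

theorem three_mul_lt (h : IsLucasSeq P u) (hP : 3 ≤ P) (k : ℕ) : 3 * u (k + 2) < u (k + 3) := by
  have hrec : u (k + 3) = P * u (k + 2) + u (k + 1) := h.add_two (k + 1)
  have := h.pos (by omega) (le_add_self : 1 ≤ k + 1)
  have := Nat.mul_le_mul_right (u (k + 2)) hP
  omega

theorem cast_even_eq (h : IsLucasSeq P u) (hP : Even P) (k : ℕ) : (u k : ZMod 2) = k := by
  induction k using Nat.twoStepInduction with
  | zero => simp [h.zero]
  | one => simp [h.one]
  | more k ih _ =>
    rw [h.add_two]
    push_cast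
    rw [ZMod.natCast_eq_zero_iff_even.mpr hP, ih, zero_mul, zero_add, eq_comm, add_eq_left]
    rfl

theorem even_iff (h : IsLucasSeq P u) (hP : Even P) (k : ℕ) : Even (u k) ↔ Even k := by
  rw [← ZMod.natCast_eq_zero_iff_even, ← ZMod.natCast_eq_zero_iff_even, h.cast_even_eq hP]

theorem add_six (h : IsLucasSeq P u) (k : ℕ) :
    u (k + 6) = (P ^ 5 + 4 * P ^ 3 + 3 * P) * u (k + 1) + (P ^ 4 + 3 * P ^ 2 + 1) * u k := by
  simp only [h.add_two]
  ring

theorem cast_add_six (h : IsLucasSeq P u) (hP : Odd P) (k : ℕ) :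
    (u (k + 6) : ZMod 4) = u k := by
  have hx := hP.sq_natCast_zmod_four_eq_one
  rw [h.add_six]
  push_cast
  generalize (P : ZMod 4) = x at hx ⊢
  generalize (u (k + 1) : ZMod 4) = b
  generalize (u k : ZMod 4) = a
  revert x a b
  decide

theorem cast_eq_cast_mod_six (h : IsLucasSeq P u) (hP : Odd P) (k : ℕ) :
    (u k : ZMod 4) = u (k % 6) := by
  conv_lhs => rw [← Nat.mod_add_div k 6]
  generalize k / 6 = q
  induction q with
  | zero => rfl
  | succ q ih => rw [Nat.mul_succ, ← add_assoc, h.cast_add_six hP, ih]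

theorem not_four_dvd_of_odd (h : IsLucasSeq P u) (hP : Odd P) {k : ℕ} (hk : Odd k) :
    ¬ 4 ∣ u k := by
  have hx := hP.sq_natCast_zmod_four_eq_one
  rw [← ZMod.natCast_eq_zero_iff, h.cast_eq_cast_mod_six hP]
  have hk6 : k % 6 = 1 ∨ k % 6 = 3 ∨ k % 6 = 5 := by obtain ⟨j, rfl⟩ := hk; omega
  -- `u 1, u 3, u 5` are `1, P² + 1, P⁴ + 3P² + 1`, i.e. `1, 2, 1` modulo 4
  rcases hk6 with hk6 | hk6 | hk6 <;>
  · simp only [hk6, h.add_two, h.zero, h.one]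
    push_cast
    generalize (P : ZMod 4) = x at hx ⊢
    revert x
    decide

end IsLucasSeq

theorem stmt_16 (P : ℕ) (hP : 3 ≤ P) (u : ℕ → ℕ)
    (hu0 : u 0 = 0) (hu1 : u 1 = 1)
    (hrec : ∀ n, 2 ≤ n → u n = P * u (n - 1) + u (n - 2))
    (n m : ℕ) (hn : 1 < n) (hmn : m < n)
    (h : Nat.totient (u n) = u m) :
    Even m := by
  have hu : IsLucasSeq P u := ⟨hu0, hu1, fun k => by simpa using hrec (k + 2) (by omega)⟩
  have hun : 3 ≤ u n := hP.trans (hu.two ▸ hu.monotoneOn (by omega) (Set.mem_Ici.mpr (by omega))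
    (Set.mem_Ici.mpr (by omega)) hn)
  have hum : Even (u m) := h ▸ totient_even hun
  rcases Nat.even_or_odd P with hPe | hPo
  · exact (hu.even_iff hPe m).mp hum
  · by_contra hm
    replace hm : Odd m := Nat.not_even_iff_odd.mp hm
    have hm3 : 3 ≤ m := by
      obtain ⟨j, rfl⟩ := hm
      rcases j with _ | j
      · simp [hu1] at hum
      · omega
    obtain ⟨k, rfl⟩ : ∃ k, n = k + 3 := ⟨n - 3, by omega⟩
    have hle := le_three_mul_totient_of_not_four_dvd
      (h ▸ hu.not_four_dvd_of_odd hPo hm)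
    have hmono : u m ≤ u (k + 2) := hu.monotoneOn (by omega) (Set.mem_Ici.mpr (by omega))
      (Set.mem_Ici.mpr (by omega)) (by omega)
    have := hu.three_mul_lt hP k
    omega
end

section
/- Suppose n > m ≥ 1, m is even, and φ(u_n) = u_m. Then α^{n−m} < u_n/φ(u_n), where α = (P+√(P²+4))/2. -/
theorem stmt_17 (P : ℕ) (hP : 3 ≤ P) (u : ℕ → ℕ)
    (hu0 : u 0 = 0) (hu1 : u 1 = 1)
    (hrec : ∀ n, 2 ≤ n → u n = P * u (n - 1) + u (n - 2))
    (α : ℝ) (hα : α = (P + Real.sqrt (P ^ 2 + 4)) / 2)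
    (n m : ℕ) (hm : 1 ≤ m) (hmn : m < n) (hmeven : Even m)
    (h : Nat.totient (u n) = u m) :
    α ^ (n - m) < (u n : ℝ) / (Nat.totient (u n) : ℝ) := by
  set s := Real.sqrt ((P:ℝ) ^ 2 + 4) with hs
  have hsq : s ^ 2 = (P:ℝ) ^ 2 + 4 := Real.sq_sqrt (by positivity)
  have hsP : (P:ℝ) < s := by
    nlinarith [Real.sqrt_nonneg ((P:ℝ)^2 + 4)]
  have hα2 : α ^ 2 = P * α + 1 := by rw [hα]; field_simp; nlinarith
  obtain ⟨β, hβ2, hβneg, hdiff⟩ :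
      ∃ β : ℝ, β ^ 2 = P * β + 1 ∧ β < 0 ∧ 0 < α - β := by
    refine ⟨((P:ℝ) - s) / 2, by field_simp; nlinarith, by nlinarith, by rw [hα]; nlinarith⟩
  -- Binet-type formula
  have binet : ∀ k, (u k : ℝ) * (α - β) = α ^ k - β ^ k := by
    have key : ∀ k, (u k : ℝ) * (α - β) = α ^ k - β ^ k ∧
        (u (k+1) : ℝ) * (α - β) = α ^ (k+1) - β ^ (k+1) := by
      intro k
      induction k with
      | zero => simp [hu0, hu1]
      | succ k ih =>
        refine ⟨ih.2, ?_⟩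
        have hr := hrec (k + 2) (by omega)
        rw [show k + 2 - 1 = k + 1 from rfl, show k + 2 - 2 = k from rfl] at hr
        rw [hr]
        push_cast
        linear_combination (P:ℝ) * ih.2 + ih.1 - α ^ k * hα2 + β ^ k * hβ2
    exact fun k => (key k).1
  -- positivity of u for positive indices
  have upos : ∀ k, 1 ≤ u (k + 1) := by
    intro k
    induction k with
    | zero => exact hu1.ge
    | succ k ih =>
      have hr := hrec (k + 2) (by omega)
      rw [show k + 2 - 1 = k + 1 from rfl, show k + 2 - 2 = k from rfl] at hr
      nlinarith
  have hum : 1 ≤ u m := by obtain ⟨m', rfl⟩ := Nat.exists_eq_add_of_le hm; rw [Nat.add_comm]; exact upos m'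
  have hunm : 1 ≤ u (n - m) := by
    obtain ⟨k, hk⟩ := Nat.exists_eq_add_of_le (Nat.succ_le_of_lt hmn)
    have : n - m = k + 1 := by omega
    rw [this]; exact upos k
  have haux1 : α ^ (n - m) * α ^ m = α ^ n := by
    rw [← pow_add, Nat.sub_add_cancel hmn.le]
  have haux2 : β ^ (n - m) * β ^ m = β ^ n := by
    rw [← pow_add, Nat.sub_add_cancel hmn.le]
  have e1 := binet n
  have e2 := binet m
  have e3 := binet (n - m)
  have key : ((u n : ℝ) - α ^ (n - m) * (u m : ℝ)) * (α - β) =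
      β ^ m * (u (n - m) : ℝ) * (α - β) := by
    linear_combination e1 - α ^ (n - m) * e2 - β ^ m * e3 - haux1 + haux2
  have key2 : (u n : ℝ) - α ^ (n - m) * (u m : ℝ) = β ^ m * (u (n - m) : ℝ) :=
    mul_right_cancel₀ hdiff.ne' key
  have hβm : 0 < β ^ m := hmeven.pow_pos hβneg.ne
  have hpos : 0 < β ^ m * (u (n - m) : ℝ) := by
    have : (1:ℝ) ≤ (u (n - m) : ℝ) := by exact_mod_cast hunm
    nlinarith
  rw [h]
  have humR : (0:ℝ) < (u m : ℝ) := by exact_mod_cast hum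
  rw [lt_div_iff₀ humR]
  linarith [key2, hpos]
end
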